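/- arXiv:2604.09909 — 8 statements merged into one kernel-verified Lean document; each statement's English description precedes it below -/
import Mathlib

section
/- Let $\{\Delta_t\}_{t\ge0}$ be a stochastic contraction process with average rate $\bar M$, and let $\bar\Delta_t = \frac{1}{t+1}\sum_{i=0}^t \Delta_i$. Then $\mathbb{E}\,\|\bar\Delta_t\|_{\bar M}^2 \le \frac{\mathbb{E}\,\|\Delta_0\|^2}{t+1}$. -/
/-!
One step of the process satisfies `‖Δₜ₊₁‖² + Δₜᵀ Mₜ Δₜ ≤ ‖Δₜ‖²`, because `0 ≼ M ≼ I` forces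
`M² ≼ M`; telescoping gives `∑ᵢ Δᵢᵀ Mᵢ Δᵢ ≤ ‖Δ₀‖²` pointwise. Since `Δᵢ` is independent of `Mᵢ`,
`𝔼[Δᵢᵀ Mᵢ Δᵢ] = 𝔼[Δᵢᵀ M̄ Δᵢ]`, and `M̄ ≽ 0` makes `x ↦ xᵀ M̄ x` convex, so by Jensen
`‖Δ̄ₜ‖²_M̄` is at most the average of the `‖Δᵢ‖²_M̄`.
-/

open MeasureTheory ProbabilityTheory Matrix

/-- The product `σ`-algebra on matrices (entrywise). -/
instance matrixMeasurableSpace {n : ℕ} : MeasurableSpace (Matrix (Fin n) (Fin n) ℝ) :=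
  (inferInstance : MeasurableSpace (Fin n → Fin n → ℝ))

open Finset

namespace Matrix

variable {ι : Type*} [Fintype ι]

theorem dotProduct_mulVec_eq_sum_sum (x y : ι → ℝ) (A : Matrix ι ι ℝ) :
    x ⬝ᵥ A *ᵥ y = ∑ j, ∑ k, x j * y k * A j k := by
  simp only [dotProduct, mulVec, mul_sum]
  exact sum_congr rfl fun j _ => sum_congr rfl fun k _ => by ring

theorem abs_mul_le_dotProduct_self (x : ι → ℝ) (j k : ι) : |x j * x k| ≤ x ⬝ᵥ x := by
  have hsq : ∀ l, x l ^ 2 ≤ x ⬝ᵥ x := fun l => by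
    simpa only [sq, dotProduct] using single_le_sum (fun i _ => mul_self_nonneg (x i)) (mem_univ l)
  rw [abs_mul]
  nlinarith [hsq j, hsq k, sq_abs (x j), sq_abs (x k), sq_nonneg (|x j| - |x k|)]

theorem convexOn_dotProduct_mulVec {A : Matrix ι ι ℝ} (hA : ∀ x, 0 ≤ x ⬝ᵥ A *ᵥ x) :
    ConvexOn ℝ Set.univ fun x => x ⬝ᵥ A *ᵥ x := by
  refine ⟨convex_univ, fun x _ y _ a b ha hb hab => ?_⟩
  obtain rfl : b = 1 - a := by linarith
  -- `a q(x) + (1 - a) q(y) - q(a x + (1 - a) y) = a (1 - a) q(x - y)`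
  have key := mul_nonneg (mul_nonneg ha hb) (hA (x - y))
  simp only [smul_eq_mul, mulVec_add, mulVec_smul, mulVec_sub, dotProduct_add, add_dotProduct,
    dotProduct_smul, smul_dotProduct, dotProduct_sub, sub_dotProduct] at key ⊢
  linarith

variable [DecidableEq ι] {A : Matrix ι ι ℝ}

theorem PosSemidef.mulVec_dotProduct_mulVec_le (hA : A.PosSemidef) (hA1 : (1 - A).PosSemidef)
    (x : ι → ℝ) : (A *ᵥ x) ⬝ᵥ (A *ᵥ x) ≤ x ⬝ᵥ A *ᵥ x := by
  have hprod : (A * (1 - A)).PosSemidef := by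
    open scoped MatrixOrder in
    exact nonneg_iff_posSemidef.mp <| Commute.mul_nonneg hA.nonneg hA1.nonneg
      ((Commute.one_right A).sub_right (Commute.refl A))
  have hsymm : x ᵥ* A = A *ᵥ x := by
    rw [← mulVec_transpose, ← conjTranspose_eq_transpose_of_trivial, hA.isHermitian.eq]
  -- `xᵀ A (1 - A) x = xᵀ A x - ‖A x‖²` by symmetry of `A`
  have h := hprod.dotProduct_mulVec_nonneg x
  rw [star_trivial, mul_sub, mul_one, sub_mulVec, dotProduct_sub, ← mulVec_mulVec,
    dotProduct_mulVec x A (A *ᵥ x), hsymm] at h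
  linarith

theorem PosSemidef.abs_apply_le_one (hA : A.PosSemidef) (hA1 : (1 - A).PosSemidef) (j k : ι) :
    |A j k| ≤ 1 := by
  set e : ι → ℝ := Pi.single k 1
  have hcol : A *ᵥ e = fun j => A j k := by rw [mulVec_single_one]; rfl
  have hle : e ⬝ᵥ A *ᵥ e ≤ e ⬝ᵥ e := by
    have h := hA1.dotProduct_mulVec_nonneg e
    rw [star_trivial, sub_mulVec, one_mulVec, dotProduct_sub] at h
    linarith
  have hsq : A j k * A j k ≤ 1 := calc
    A j k * A j k ≤ |A j k * A j k| := le_abs_self _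
    _ ≤ (A *ᵥ e) ⬝ᵥ (A *ᵥ e) := by
        rw [hcol]; exact abs_mul_le_dotProduct_self (fun j => A j k) j j
    _ ≤ e ⬝ᵥ e := (hA.mulVec_dotProduct_mulVec_le hA1 e).trans hle
    _ = 1 := by simp [e]
  exact abs_le_one_iff_mul_self_le_one.mpr hsq

end Matrix

section Contraction

variable {ι : Type*} [Fintype ι] [DecidableEq ι] {x : ℕ → ι → ℝ} {A : ℕ → Matrix ι ι ℝ}

theorem sum_range_dotProduct_mulVec_add_dotProduct_self_le (hA : ∀ i, (A i).PosSemidef)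
    (hA1 : ∀ i, (1 - A i).PosSemidef) (hx : ∀ i, x (i + 1) = (1 - A i) *ᵥ x i) (s : ℕ) :
    ∑ i ∈ range s, x i ⬝ᵥ A i *ᵥ x i + x s ⬝ᵥ x s ≤ x 0 ⬝ᵥ x 0 := by
  induction s with
  | zero => simp
  | succ s ih =>
    -- `0 ≼ 1 - A s ≼ 1`, so `‖(1 - A s) x‖² ≤ xᵀ (1 - A s) x = ‖x‖² - xᵀ A s x`
    have hstep := (hA1 s).mulVec_dotProduct_mulVec_le (by simpa using hA s) (x s)
    have hquad : x s ⬝ᵥ (1 - A s) *ᵥ x s = x s ⬝ᵥ x s - x s ⬝ᵥ A s *ᵥ x s := by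
      rw [sub_mulVec, one_mulVec, dotProduct_sub]
    rw [hquad, ← hx] at hstep
    rw [sum_range_succ]
    linarith

theorem dotProduct_self_le_of_contraction (hA : ∀ i, (A i).PosSemidef)
    (hA1 : ∀ i, (1 - A i).PosSemidef) (hx : ∀ i, x (i + 1) = (1 - A i) *ᵥ x i) (s : ℕ) :
    x s ⬝ᵥ x s ≤ x 0 ⬝ᵥ x 0 := by
  have htel := sum_range_dotProduct_mulVec_add_dotProduct_self_le hA hA1 hx s
  have hsum := sum_nonneg fun i (_ : i ∈ range s) => (hA i).dotProduct_mulVec_nonneg (x i)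
  simp only [star_trivial] at hsum
  linarith

theorem sum_range_dotProduct_mulVec_le_of_contraction (hA : ∀ i, (A i).PosSemidef)
    (hA1 : ∀ i, (1 - A i).PosSemidef) (hx : ∀ i, x (i + 1) = (1 - A i) *ᵥ x i) (s : ℕ) :
    ∑ i ∈ range s, x i ⬝ᵥ A i *ᵥ x i ≤ x 0 ⬝ᵥ x 0 := by
  have htel := sum_range_dotProduct_mulVec_add_dotProduct_self_le hA hA1 hx s
  have hlast := dotProduct_self_star_nonneg (x s)
  simp only [star_trivial] at hlast
  linarith

end Contraction

section Expectation

variable {Ω : Type*} [MeasurableSpace Ω] {μ : Measure Ω} {ι : Type*} [Fintype ι]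

theorem integral_dotProduct_mulVec_average_le {κ : Type*} {s : Finset κ} (hs : s.Nonempty)
    {A : Matrix ι ι ℝ} (hA : ∀ x, 0 ≤ x ⬝ᵥ A *ᵥ x) {X : κ → Ω → ι → ℝ}
    (hX : ∀ i ∈ s, Integrable (fun ω => X i ω ⬝ᵥ A *ᵥ X i ω) μ) :
    ∫ ω, ((#s : ℝ)⁻¹ • ∑ i ∈ s, X i ω) ⬝ᵥ A *ᵥ ((#s : ℝ)⁻¹ • ∑ i ∈ s, X i ω) ∂μ ≤
      (#s : ℝ)⁻¹ * ∑ i ∈ s, ∫ ω, X i ω ⬝ᵥ A *ᵥ X i ω ∂μ := by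
  have jensen : ∀ ω, ((#s : ℝ)⁻¹ • ∑ i ∈ s, X i ω) ⬝ᵥ A *ᵥ ((#s : ℝ)⁻¹ • ∑ i ∈ s, X i ω) ≤
      ∑ i ∈ s, (#s : ℝ)⁻¹ * (X i ω ⬝ᵥ A *ᵥ X i ω) := fun ω => by
    rw [smul_sum]
    exact (convexOn_dotProduct_mulVec hA).map_sum_le (fun _ _ => by positivity)
      (by simp [hs.card_pos.ne']) (fun _ _ => Set.mem_univ _)
  calc _ ≤ ∫ ω, ∑ i ∈ s, (#s : ℝ)⁻¹ * (X i ω ⬝ᵥ A *ᵥ X i ω) ∂μ :=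
        integral_mono_of_nonneg (ae_of_all _ fun ω => hA _)
          (integrable_finsetSum _ fun i hi => (hX i hi).const_mul _) (ae_of_all _ jensen)
    _ = _ := by
        rw [integral_finsetSum _ fun i hi => (hX i hi).const_mul _, mul_sum]
        simp_rw [integral_const_mul]

variable {X : Ω → ι → ℝ} {A : Ω → Matrix ι ι ℝ}

theorem integrable_dotProduct_mulVec
    (h : ∀ j k, Integrable (fun ω => X ω j * X ω k * A ω j k) μ) :
    Integrable (fun ω => X ω ⬝ᵥ A ω *ᵥ X ω) μ := by
  simp_rw [dotProduct_mulVec_eq_sum_sum]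
  exact integrable_finsetSum _ fun j _ => integrable_finsetSum _ fun k _ => h j k

theorem integral_dotProduct_mulVec_eq_sum_sum
    (h : ∀ j k, Integrable (fun ω => X ω j * X ω k * A ω j k) μ) :
    ∫ ω, X ω ⬝ᵥ A ω *ᵥ X ω ∂μ = ∑ j, ∑ k, ∫ ω, X ω j * X ω k * A ω j k ∂μ := by
  simp_rw [dotProduct_mulVec_eq_sum_sum]
  rw [integral_finsetSum _ fun j _ => integrable_finsetSum _ fun k _ => h j k]
  exact sum_congr rfl fun j _ => integral_finsetSum _ fun k _ => h j k

end Expectation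

section Independence

variable {Ω : Type*} [MeasurableSpace Ω] {μ : Measure Ω} {n : ℕ}
  {X : Ω → Fin n → ℝ} {A : Ω → Matrix (Fin n) (Fin n) ℝ}

theorem ProbabilityTheory.IndepFun.mul_apply_apply (hXA : IndepFun X A μ) (j k : Fin n) :
    IndepFun (fun ω => X ω j * X ω k) (fun ω => A ω j k) μ :=
  hXA.comp (φ := fun x : Fin n → ℝ => x j * x k)
    (ψ := fun a : Matrix (Fin n) (Fin n) ℝ => a j k) (by fun_prop) (by fun_prop)

theorem ProbabilityTheory.IndepFun.integrable_mul_apply (hXA : IndepFun X A μ)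
    (hX : ∀ j k, Integrable (fun ω => X ω j * X ω k) μ)
    (hA : ∀ j k, Integrable (fun ω => A ω j k) μ) (j k : Fin n) :
    Integrable (fun ω => X ω j * X ω k * A ω j k) μ :=
  (hXA.mul_apply_apply j k).integrable_mul (hX j k) (hA j k)

theorem ProbabilityTheory.IndepFun.integral_dotProduct_mulVec (hXA : IndepFun X A μ)
    (hX : ∀ j k, Integrable (fun ω => X ω j * X ω k) μ)
    (hA : ∀ j k, Integrable (fun ω => A ω j k) μ) {Abar : Matrix (Fin n) (Fin n) ℝ}
    (hmean : ∀ j k, ∫ ω, A ω j k ∂μ = Abar j k) :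
    ∫ ω, X ω ⬝ᵥ A ω *ᵥ X ω ∂μ = ∫ ω, X ω ⬝ᵥ Abar *ᵥ X ω ∂μ := by
  rw [integral_dotProduct_mulVec_eq_sum_sum (hXA.integrable_mul_apply hX hA),
    integral_dotProduct_mulVec_eq_sum_sum (A := fun _ => Abar) fun j k => (hX j k).mul_const _]
  refine sum_congr rfl fun j _ => sum_congr rfl fun k _ => ?_
  rw [integral_mul_const, ← hmean]
  exact (hXA.mul_apply_apply j k).integral_mul_eq_mul_integral
    (hX j k).aestronglyMeasurable (hA j k).aestronglyMeasurable

theorem dotProduct_mulVec_nonneg_of_integral_eq [IsProbabilityMeasure μ]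
    (hA : ∀ j k, Integrable (fun ω => A ω j k) μ) {Abar : Matrix (Fin n) (Fin n) ℝ}
    (hmean : ∀ j k, ∫ ω, A ω j k ∂μ = Abar j k) (hpsd : ∀ ω, (A ω).PosSemidef) (x : Fin n → ℝ) :
    0 ≤ x ⬝ᵥ Abar *ᵥ x := by
  have h := IndepFun.integral_dotProduct_mulVec (indepFun_const_left x A)
    (fun j k => integrable_const _) hA hmean
  rw [integral_const, probReal_univ, one_smul] at h
  rw [← h]
  exact integral_nonneg fun ω => by simpa using (hpsd ω).dotProduct_mulVec_nonneg x

end Independence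

/-- for a stochastic contraction process with average rate `M̄`,
the averaged iterate `Δ̄_t = (1/(t+1)) ∑_{i=0}^t Δ_i` satisfies
`𝔼 ‖Δ̄_t‖²_{M̄} ≤ 𝔼‖Δ_0‖² / (t+1)`. -/
theorem averaged_iterate {n : ℕ} {Ω : Type*} [MeasurableSpace Ω]
    (μ : Measure Ω) [IsProbabilityMeasure μ]
    (M : ℕ → Ω → Matrix (Fin n) (Fin n) ℝ)
    (Δ : ℕ → Ω → (Fin n → ℝ))
    (Mbar : Matrix (Fin n) (Fin n) ℝ)
    (hMmeas : ∀ t, Measurable (M t))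
    (hΔmeas : ∀ t, Measurable (Δ t))
    (hpsd : ∀ t ω, (M t ω).PosSemidef)
    (hcontr : ∀ t ω, ((1 : Matrix (Fin n) (Fin n) ℝ) - M t ω).PosSemidef)
    (hmean : ∀ t i j, (∫ ω, M t ω i j ∂μ) = Mbar i j)
    (hrec : ∀ t ω, Δ (t + 1) ω = ((1 : Matrix (Fin n) (Fin n) ℝ) - M t ω) *ᵥ Δ t ω)
    (hindep : ∀ t, IndepFun (Δ t) (M t) μ)
    (hint : Integrable (fun ω => Δ 0 ω ⬝ᵥ Δ 0 ω) μ)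
    (t : ℕ) :
    (∫ ω, (((t : ℝ) + 1)⁻¹ • ∑ i ∈ Finset.range (t + 1), Δ i ω) ⬝ᵥ
        (Mbar *ᵥ (((t : ℝ) + 1)⁻¹ • ∑ i ∈ Finset.range (t + 1), Δ i ω)) ∂μ) ≤
      (∫ ω, Δ 0 ω ⬝ᵥ Δ 0 ω ∂μ) / ((t : ℝ) + 1) := by
  have hΔint : ∀ i j k, Integrable (fun ω => Δ i ω j * Δ i ω k) μ := fun i j k =>
    hint.mono' (by fun_prop) <| ae_of_all _ fun ω => (abs_mul_le_dotProduct_self _ j k).trans <|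
      dotProduct_self_le_of_contraction (x := (Δ · ω)) (hpsd · ω) (hcontr · ω) (hrec · ω) i
  have hMint : ∀ i j k, Integrable (fun ω => M i ω j k) μ := fun i j k =>
    .of_bound (by fun_prop) 1 <| ae_of_all _ fun ω => (hpsd i ω).abs_apply_le_one (hcontr i ω) j k
  have hMbar : ∀ x, 0 ≤ x ⬝ᵥ Mbar *ᵥ x :=
    dotProduct_mulVec_nonneg_of_integral_eq (hMint 0) (hmean 0) (hpsd 0)
  have hqint : ∀ i, Integrable (fun ω => Δ i ω ⬝ᵥ M i ω *ᵥ Δ i ω) μ := fun i =>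
    integrable_dotProduct_mulVec ((hindep i).integrable_mul_apply (hΔint i) (hMint i))
  calc _ ≤ ((t : ℝ) + 1)⁻¹ * ∑ i ∈ range (t + 1), ∫ ω, Δ i ω ⬝ᵥ Mbar *ᵥ Δ i ω ∂μ := by
        simpa using integral_dotProduct_mulVec_average_le nonempty_range_add_one hMbar
          fun i _ => integrable_dotProduct_mulVec (A := fun _ => Mbar) fun j k =>
            (hΔint i j k).mul_const _
    _ = ((t : ℝ) + 1)⁻¹ * ∫ ω, ∑ i ∈ range (t + 1), Δ i ω ⬝ᵥ M i ω *ᵥ Δ i ω ∂μ := by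
        rw [integral_finsetSum _ fun i _ => hqint i]
        congr 1
        exact sum_congr rfl fun i _ =>
          ((hindep i).integral_dotProduct_mulVec (hΔint i) (hMint i) (hmean i)).symm
    _ ≤ ((t : ℝ) + 1)⁻¹ * ∫ ω, Δ 0 ω ⬝ᵥ Δ 0 ω ∂μ := by
        refine mul_le_mul_of_nonneg_left ?_ (by positivity)
        exact integral_mono (integrable_finsetSum _ fun i _ => hqint i) hint fun ω =>
          sum_range_dotProduct_mulVec_le_of_contraction (x := (Δ · ω)) (hpsd · ω) (hcontr · ω)
            (hrec · ω) _
    _ = _ := inv_mul_eq_div _ _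
end

section
/- Let $\bar M$ be an $n\times n$ symmetric matrix with $0\preceq \bar M\preceq I$, and define the matrix recursion $N_0=\bar M$, $N_{t+1}=N_t(I-2\bar M)+\|N_t\|\cdot\bar M$ (where $\|\cdot\|$ is the operator norm). Then every $N_t$ is a polynomial in $\bar M$ (hence symmetric and commuting with $\bar M$), and $N_t \succeq 0$ for all $t\ge0$. -/
/-!
Inductively `N t = p_t(M̄)` for a real polynomial `p_t` that is nonnegative on `σ(M̄) ⊆ [0, 1]`.
For `λ ∈ σ(M̄)` the value `p_t(λ)` lies in `σ(N t)`, so `p_t(λ) ≤ ‖N t‖`, and therefore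
`p_{t+1}(λ) = p_t(λ) (1 - λ) + λ (‖N t‖ - p_t(λ)) ≥ 0`. The continuous functional calculus turns
nonnegativity on the spectrum into `N t ⪰ 0`.
-/

open scoped Matrix.Norms.L2Operator MatrixOrder
open Polynomial

section

variable {A : Type*} [NormedRing A] [StarRing A] [CStarRing A] [CompleteSpace A]
  [NormedAlgebra ℝ A]

lemma le_norm_of_mem_spectrum {b : A} {x : ℝ} (hx : x ∈ spectrum ℝ b) : x ≤ ‖b‖ := by
  cases subsingleton_or_nontrivial A
  · simp [spectrum.of_subsingleton] at hx
  · exact (le_abs_self x).trans (spectrum.norm_le_norm_of_mem hx)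

variable [PartialOrder A] [StarOrderedRing A] [ContinuousFunctionalCalculus ℝ A IsSelfAdjoint]
  [NonnegSpectrumClass ℝ A]

lemma recursion_exists_aeval_nonneg_on_spectrum {a : A} (ha₀ : 0 ≤ a) (ha₁ : a ≤ 1)
    {N : ℕ → A} (hN₀ : N 0 = a) (hN : ∀ t, N (t + 1) = N t * (1 - (2 : ℝ) • a) + ‖N t‖ • a)
    (t : ℕ) : ∃ p : ℝ[X], N t = aeval a p ∧ ∀ x ∈ spectrum ℝ a, 0 ≤ p.eval x := by
  have hspec₀ := (StarOrderedRing.nonneg_iff_spectrum_nonneg (R := ℝ) a).mp ha₀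
  have hspec₁ := (CFC.le_one_iff (R := ℝ) a).mp ha₁
  induction t with
  | zero => exact ⟨X, by simp [hN₀], fun x hx => by simpa using hspec₀ x hx⟩
  | succ t ih =>
    obtain ⟨p, hp, hp_nonneg⟩ := ih
    refine ⟨p * (1 - C 2 * X) + C ‖N t‖ * X, by simp [hN t, hp, Algebra.smul_def], fun x hx => ?_⟩
    have hp_le : p.eval x ≤ ‖N t‖ :=
      le_norm_of_mem_spectrum (hp ▸ spectrum.subset_polynomial_aeval a p ⟨x, hx, rfl⟩)
    have hsplit : (p * (1 - C 2 * X) + C ‖N t‖ * X).eval x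
        = p.eval x * (1 - x) + x * (‖N t‖ - p.eval x) := by
      simp only [eval_add, eval_mul, eval_sub, eval_one, eval_C, eval_X]
      ring
    rw [hsplit]
    exact add_nonneg (mul_nonneg (hp_nonneg x hx) (sub_nonneg.2 (hspec₁ x hx)))
      (mul_nonneg (hspec₀ x hx) (sub_nonneg.2 hp_le))

end

/-- for the recursion `N₀ = M̄`, `N_{t+1} = N_t (I - 2M̄) + ‖N_t‖ M̄`
(with `‖·‖` the `ℓ²` operator norm), every `N_t` is a polynomial in `M̄`
(hence symmetric and commuting with `M̄`) and `N_t ⪰ 0`. -/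
theorem matrix_recursion_psd {n : ℕ}
    (Mbar : Matrix (Fin n) (Fin n) ℝ)
    (hM0 : Mbar.PosSemidef) (hM1 : (1 - Mbar).PosSemidef)
    (N : ℕ → Matrix (Fin n) (Fin n) ℝ)
    (hN0 : N 0 = Mbar)
    (hNrec : ∀ t : ℕ, N (t + 1) = N t * (1 - (2 : ℝ) • Mbar) + ‖N t‖ • Mbar) :
    ∀ t : ℕ,
      (∃ p : Polynomial ℝ, N t = Polynomial.aeval Mbar p) ∧
      (N t).IsSymm ∧ N t * Mbar = Mbar * N t ∧ (N t).PosSemidef := by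
  intro t
  obtain ⟨p, hp, hp_nonneg⟩ := recursion_exists_aeval_nonneg_on_spectrum hM0.nonneg
    (Matrix.le_iff.mpr hM1) hN0 hNrec t
  have hpsd : (N t).PosSemidef := by
    rw [← Matrix.nonneg_iff_posSemidef, hp, ← cfc_polynomial p Mbar]
    exact cfc_nonneg hp_nonneg
  refine ⟨⟨p, hp⟩, Matrix.isHermitian_iff_isSymm.mp hpsd.isHermitian, ?_, hpsd⟩
  simpa [hp] using ((commute_X p).map (aeval Mbar)).eq.symm
end

section
/- Let $\bar M$ be symmetric with $0\preceq \bar M\preceq I$ and define $N_0=\bar M$, $N_{t+1}=N_t(I-2\bar M)+\|N_t\|\cdot\bar M$. Then for every $t\ge0$, $N_t \succeq \bar M (I-\bar M)^t$; consequently $\|N_t\| \ge \max_k \rho_k(1-\rho_k)^t$ where $\rho_1,\dots,\rho_n$ are the eigenvalues of $\bar M$. -/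
open scoped Matrix.Norms.L2Operator

/-!
Diagonalize `M̄ = U diag(ρ) Uᴴ`. The recursion only involves ring operations, `M̄` and real
scalars, so `N_t = U diag(g_t) Uᴴ`, where each `g_t k` obeys the scalar recursion
`g_{t+1} = g_t (1 - 2ρ_k) + ‖N_t‖ ρ_k`. As `g_t k ≤ ‖N_t‖` and `0 ≤ ρ_k ≤ 1`, every step gives
`g_{t+1} ≥ g_t (1 - ρ_k)`, hence `g_t k ≥ ρ_k (1 - ρ_k)^t`; both claims are read off the diagonal.
-/

open Matrix Unitary

section Recursion

variable {A B : Type*} [Ring A] [Algebra ℝ A] [Ring B] [Algebra ℝ B]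

def recursionSeq (a : A) (c : ℕ → ℝ) : ℕ → A
  | 0 => a
  | t + 1 => recursionSeq a c t * (1 - (2 : ℝ) • a) + c t • a

theorem eq_recursionSeq {a : A} {c : ℕ → ℝ} {N : ℕ → A} (hN0 : N 0 = a)
    (hN : ∀ t, N (t + 1) = N t * (1 - (2 : ℝ) • a) + c t • a) : N = recursionSeq a c := by
  funext t
  induction t with
  | zero => exact hN0
  | succ t ih => rw [hN, ih, recursionSeq]

theorem map_recursionSeq (ψ : A →ₐ[ℝ] B) (a : A) (c : ℕ → ℝ) (t : ℕ) :
    ψ (recursionSeq a c t) = recursionSeq (ψ a) c t := by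
  induction t with
  | zero => rfl
  | succ t ih => simp [recursionSeq, ih]

theorem recursionSeq_apply {ι : Type*} (ρ : ι → ℝ) (c : ℕ → ℝ) (t : ℕ) (k : ι) :
    recursionSeq ρ c t k = recursionSeq (ρ k) c t :=
  map_recursionSeq (Pi.evalAlgHom ℝ (fun _ => ℝ) k) ρ c t

end Recursion

theorem mul_one_sub_pow_le_recursionSeq {ρ : ℝ} (hρ0 : 0 ≤ ρ) (hρ1 : ρ ≤ 1) {c : ℕ → ℝ}
    (hc : ∀ t, recursionSeq ρ c t ≤ c t) (t : ℕ) : ρ * (1 - ρ) ^ t ≤ recursionSeq ρ c t := by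
  induction t with
  | zero => simp [recursionSeq]
  | succ t ih =>
    calc ρ * (1 - ρ) ^ (t + 1) = ρ * (1 - ρ) ^ t * (1 - ρ) := by ring
      _ ≤ recursionSeq ρ c t * (1 - ρ) := by gcongr
      _ ≤ recursionSeq ρ c t * (1 - (2 : ℝ) • ρ) + c t • ρ := by
        rw [smul_eq_mul, smul_eq_mul]; linarith [mul_le_mul_of_nonneg_right (hc t) hρ0]

theorem CStarRing.norm_conjStarAlgAut {S E : Type*} [NormedRing E] [StarRing E] [CStarRing E]
    [SMul S E] [IsScalarTower S E E] [SMulCommClass S E E] (U : unitary E) (x : E) :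
    ‖conjStarAlgAut S E U x‖ = ‖x‖ := by
  simp [← coe_star]

theorem Matrix.posSemidef_conjStarAlgAut_iff {R n : Type*} [CommRing R] [PartialOrder R]
    [StarRing R] [StarOrderedRing R] [Fintype n] [DecidableEq n]
    (U : unitary (Matrix n n R)) {X : Matrix n n R} :
    (conjStarAlgAut R _ U X).PosSemidef ↔ X.PosSemidef := by
  refine ⟨fun h => ?_, fun h => ?_⟩
  · have hX : star (U : Matrix n n R) * conjStarAlgAut R _ U X * U = X := by
      simp only [conjStarAlgAut_apply, mul_assoc, coe_star_mul_self, mul_one]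
      rw [← mul_assoc, coe_star_mul_self, one_mul]
    have := h.conjTranspose_mul_mul_same (U : Matrix n n R)
    rwa [← star_eq_conjTranspose, hX] at this
  · exact h.mul_mul_conjTranspose_same (U : Matrix n n R)

/-- for the recursion `N₀ = M̄`, `N_{t+1} = N_t (I - 2M̄) + ‖N_t‖ M̄`,
one has `N_t ⪰ M̄ (I - M̄)^t` for all `t`, and consequently
`‖N_t‖ ≥ ρ_k (1 - ρ_k)^t` for every eigenvalue `ρ_k` of `M̄`. -/
theorem matrix_recursion_lower {n : ℕ}
    (Mbar : Matrix (Fin n) (Fin n) ℝ)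
    (hM0 : Mbar.PosSemidef) (hM1 : (1 - Mbar).PosSemidef)
    (N : ℕ → Matrix (Fin n) (Fin n) ℝ)
    (hN0 : N 0 = Mbar)
    (hNrec : ∀ t : ℕ, N (t + 1) = N t * (1 - (2 : ℝ) • Mbar) + ‖N t‖ • Mbar) :
    ∀ t : ℕ,
      (N t - Mbar * (1 - Mbar) ^ t).PosSemidef ∧
      ∀ k : Fin n,
        hM0.isHermitian.eigenvalues k * (1 - hM0.isHermitian.eigenvalues k) ^ t ≤
          ‖N t‖ := by
  set ρ := hM0.isHermitian.eigenvalues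
  set U := hM0.isHermitian.eigenvectorUnitary
  let ψ : (Fin n → ℝ) →ₐ[ℝ] Matrix (Fin n) (Fin n) ℝ :=
    (conjStarAlgAut ℝ _ U).toAlgEquiv.toAlgHom.comp (diagonalAlgHom ℝ)
  have hψ_psd (d : Fin n → ℝ) : (ψ d).PosSemidef ↔ 0 ≤ d :=
    (posSemidef_conjStarAlgAut_iff U).trans posSemidef_diagonal_iff
  have hψ_norm (d : Fin n → ℝ) : ‖ψ d‖ = ‖d‖ :=
    (CStarRing.norm_conjStarAlgAut (S := ℝ) U _).trans (l2_opNorm_diagonal d)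
  have hMbar : Mbar = ψ ρ := by
    simpa [ψ, RCLike.ofReal_real_eq_id] using hM0.isHermitian.spectral_theorem
  have hN (t : ℕ) : N t = ψ (recursionSeq ρ (‖N ·‖) t) := by
    rw [congrFun (eq_recursionSeq hN0 hNrec) t, hMbar, map_recursionSeq]
  have hρ1 (k : Fin n) : ρ k ≤ 1 := by
    rw [hMbar, ← map_one ψ, ← map_sub, hψ_psd] at hM1
    simpa using hM1 k
  have hle_norm (t : ℕ) (k : Fin n) : recursionSeq (ρ k) (‖N ·‖) t ≤ ‖N t‖ := by
    rw [← recursionSeq_apply, hN t, hψ_norm]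
    exact (Real.le_norm_self _).trans (norm_le_pi_norm _ k)
  have hlow (t : ℕ) (k : Fin n) : ρ k * (1 - ρ k) ^ t ≤ recursionSeq (ρ k) (‖N ·‖) t :=
    mul_one_sub_pow_le_recursionSeq (hM0.eigenvalues_nonneg k) (hρ1 k) (fun t => hle_norm t k) t
  refine fun t => ⟨?_, fun k => (hlow t k).trans (hle_norm t k)⟩
  rw [hN, hMbar, ← map_one ψ, ← map_sub, ← map_pow, ← map_mul, ← map_sub, hψ_psd]
  intro k
  simpa [recursionSeq_apply] using hlow t k
end

section
/- For every $\alpha\in(0,1]$, the function $f_\alpha(t)=\frac{(t+2)^\alpha}{2(t+1)}\left(\frac{t}{t+1}\right)^t$ is strictly decreasing for real $t>0$. -/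
open Real

/-! Write `f_α = exp ∘ L_α` with `L_α t = α log (t+2) - log (2(t+1)) + t log (t/(t+1))`.
In `L_α'` the terms `± 1/(t+1)` cancel, leaving `L_α' t = α/(t+2) + log (t/(t+1))`, and
`log (t/(t+1)) < t/(t+1) - 1 = -1/(t+1) < -1/(t+2) ≤ -α/(t+2)`. -/

noncomputable def logFAlpha (α t : ℝ) : ℝ :=
  α * log (t + 2) - log (2 * (t + 1)) + t * log (t / (t + 1))

lemma log_div_add_one_lt {t : ℝ} (ht : 0 < t) : log (t / (t + 1)) < -1 / (t + 1) := by
  have ht1 : 0 < t + 1 := by linarith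
  calc log (t / (t + 1)) < t / (t + 1) - 1 :=
        log_lt_sub_one_of_pos (div_pos ht ht1) (by rw [ne_eq, div_eq_one_iff_eq ht1.ne']; linarith)
    _ = -1 / (t + 1) := by field_simp; ring

lemma hasDerivAt_mul_log_div_add_one {t : ℝ} (ht : 0 < t) :
    HasDerivAt (fun s => s * log (s / (s + 1))) (log (t / (t + 1)) + 1 / (t + 1)) t := by
  have ht1 : 0 < t + 1 := by linarith
  have hquot := (hasDerivAt_id' t).fun_div ((hasDerivAt_id' t).add_const 1) ht1.ne'
  refine ((hasDerivAt_id' t).fun_mul (hquot.log (div_pos ht ht1).ne')).congr_deriv ?_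
  field_simp
  ring

lemma hasDerivAt_logFAlpha (α : ℝ) {t : ℝ} (ht : 0 < t) :
    HasDerivAt (logFAlpha α) (α / (t + 2) + log (t / (t + 1))) t := by
  have h2 : HasDerivAt (fun s => log (s + 2)) (1 / (t + 2)) t := by
    simpa using ((hasDerivAt_id' t).add_const 2).log (by linarith)
  have h1 : HasDerivAt (fun s => log (2 * (s + 1))) (1 / (t + 1)) t := by
    convert (((hasDerivAt_id' t).add_const 1).const_mul 2).log (by linarith) using 1
    field_simp
  exact (((h2.const_mul α).fun_sub h1).fun_add (hasDerivAt_mul_log_div_add_one ht)).congr_deriv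
    (by ring)

lemma strictAntiOn_logFAlpha {α : ℝ} (hα : α ≤ 1) :
    StrictAntiOn (logFAlpha α) (Set.Ioi 0) := by
  have hderiv : ∀ t ∈ Set.Ioi (0 : ℝ), HasDerivAt (logFAlpha α) _ t :=
    fun t ht => hasDerivAt_logFAlpha α ht
  refine strictAntiOn_of_hasDerivWithinAt_neg (convex_Ioi 0)
    (fun t ht => (hderiv t ht).continuousAt.continuousWithinAt)
    (fun t ht => (hderiv t (interior_subset ht)).hasDerivWithinAt) fun t ht => ?_
  rw [interior_Ioi, Set.mem_Ioi] at ht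
  have ht2 : (0 : ℝ) < t + 2 := by linarith
  calc α / (t + 2) + log (t / (t + 1)) < 1 / (t + 2) + -1 / (t + 1) :=
        add_lt_add_of_le_of_lt (div_le_div_of_nonneg_right hα ht2.le) (log_div_add_one_lt ht)
    _ < 0 := by
        rw [neg_div]
        have ht1 : (0 : ℝ) < t + 1 := by linarith
        linarith [one_div_lt_one_div_of_lt ht1 (by linarith : t + 1 < t + 2)]

lemma exp_logFAlpha (α : ℝ) {t : ℝ} (ht : 0 < t) :
    exp (logFAlpha α t) = (t + 2) ^ α / (2 * (t + 1)) * (t / (t + 1)) ^ t := by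
  rw [logFAlpha, exp_add, exp_sub, mul_comm α, mul_comm t, ← rpow_def_of_pos (by linarith),
    ← rpow_def_of_pos (div_pos ht (by linarith)), exp_log (by linarith)]

theorem f_alpha_strictAnti_general (α : ℝ) (hα1 : α ≤ 1) :
    StrictAntiOn
      (fun t : ℝ => (t + 2) ^ α / (2 * (t + 1)) * (t / (t + 1)) ^ t)
      (Set.Ioi (0 : ℝ)) :=
  (exp_strictMono.comp_strictAntiOn (strictAntiOn_logFAlpha hα1)).congr
    fun _ ht => exp_logFAlpha α ht

/-- for `α ∈ (0,1]`, the function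
`f_α(t) = (t+2)^α / (2(t+1)) * (t/(t+1))^t` is strictly decreasing on `(0,∞)`. -/
theorem f_alpha_strictAnti (α : ℝ) (hα0 : 0 < α) (hα1 : α ≤ 1) :
    StrictAntiOn
      (fun t : ℝ => (t + 2) ^ α / (2 * (t + 1)) * (t / (t + 1)) ^ t)
      (Set.Ioi (0 : ℝ)) :=
  f_alpha_strictAnti_general α hα1
end

section
/- Fix $0<\alpha<1$, an integer $t\ge1$, and $\rho\in(0,1/2)$. Define $B_t(\rho,\alpha)=\rho\sum_{i=1}^t \frac{(1-2\rho)^{t-i}}{i^\alpha}$ and $L_\alpha(\theta)=\theta\int_0^1 e^{-2\theta u}(1-u)^{-\alpha}\,du$. Then $t^\alpha B_t(\rho,\alpha) \le L_\alpha\!\left(\frac{t}{2}(-\log(1-2\rho))\right)$. -/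
/-!
Put `β = 1 - 2ρ` and `θ = -(t/2) log β`, so that `e^{-2θ(1-v)} = β^{t(1-v)}`. After the
substitution `v = 1 - u`, split `[0, 1]` into the `t` intervals `[(i-1)/t, i/t]`. On the `i`-th
one the weight `v^{-α}` is at least `(i/t)^{-α}`, and the exponential integrates exactly to
`ρ β^{t-i} / θ`; summing these lower bounds gives `θ⁻¹ t^α B_t(ρ, α)`.
-/

open Real MeasureTheory Set Finset

theorem sum_mul_integral_le_integral_mul_of_antitoneOn {w g : ℝ → ℝ} {x : ℕ → ℝ} {n : ℕ}
    (hx : Monotone x) (hw : ∀ u ∈ Ioo (x 0) (x n), 0 ≤ w u)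
    (hg : AntitoneOn g (Ioc (x 0) (x n)))
    (hw_int : IntervalIntegrable w volume (x 0) (x n))
    (hwg_int : IntervalIntegrable (fun u ↦ w u * g u) volume (x 0) (x n)) :
    ∑ j ∈ range n, g (x (j + 1)) * ∫ u in x j..x (j + 1), w u ≤
      ∫ u in x 0..x n, w u * g u := by
  have piece_sub {j : ℕ} (hj : j < n) : uIcc (x j) (x (j + 1)) ⊆ uIcc (x 0) (x n) := by
    rw [uIcc_of_le (hx j.le_succ), uIcc_of_le (hx (Nat.zero_le n))]
    exact Icc_subset_Icc (hx j.zero_le) (hx hj)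
  rw [← intervalIntegral.sum_integral_adjacent_intervals (a := x)
    fun j hj ↦ hwg_int.mono_set (piece_sub hj)]
  refine sum_le_sum fun j hj ↦ ?_
  have hj := mem_range.mp hj
  rw [← intervalIntegral.integral_const_mul]
  refine intervalIntegral.integral_mono_on_of_le_Ioo (hx j.le_succ)
    ((hw_int.mono_set (piece_sub hj)).const_mul _) (hwg_int.mono_set (piece_sub hj))
    fun u hu ↦ ?_
  have hu₀ : x 0 < u := (hx j.zero_le).trans_lt hu.1
  have hun : u < x n := hu.2.trans_le (hx hj)
  rw [mul_comm]
  exact mul_le_mul_of_nonneg_left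
    (hg ⟨hu₀, hun.le⟩ ⟨hu₀.trans hu.2, hx hj⟩ hu.2.le) (hw u ⟨hu₀, hun⟩)

theorem sum_rpow_neg_mul_integral_le_integral_mul_rpow_neg {w : ℝ → ℝ} (hw_cont : Continuous w)
    (hw : ∀ v, 0 ≤ w v) {α : ℝ} (hα0 : 0 ≤ α) (hα1 : α < 1) {t : ℕ} (ht : t ≠ 0) :
    ∑ j ∈ range t, (((j + 1 : ℕ) : ℝ) / t) ^ (-α) * ∫ v in (j : ℝ) / t..((j + 1 : ℕ) : ℝ) / t, w v ≤
      ∫ v in (0 : ℝ)..1, w v * v ^ (-α) := by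
  have hx0 : ((0 : ℕ) : ℝ) / t = 0 := by simp
  have hxt : (t : ℝ) / t = 1 := div_self (by exact_mod_cast ht)
  have key := sum_mul_integral_le_integral_mul_of_antitoneOn (x := fun k : ℕ ↦ (k : ℝ) / t)
    (n := t) (w := w) (g := fun v ↦ v ^ (-α))
    (fun a b hab ↦ by dsimp only; gcongr) (fun v _ ↦ hw v)
    ((antitoneOn_rpow_Ioi_of_exponent_nonpos (by linarith)).mono fun v hv ↦ ?_)
    (hw_cont.intervalIntegrable _ _) ?_
  · rwa [hx0, hxt] at key
  · rw [hx0] at hv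
    exact hv.1
  · rw [hx0, hxt]
    exact (intervalIntegral.intervalIntegrable_rpow' (by linarith)).continuousOn_mul
      hw_cont.continuousOn

theorem integral_exp_mul_sub {c : ℝ} (hc : c ≠ 0) (d a b : ℝ) :
    ∫ v in a..b, exp (c * (d - v)) = (exp (c * (d - a)) - exp (c * (d - b))) / c := by
  rw [intervalIntegral.integral_comp_sub_left (fun v ↦ exp (c * v)),
    intervalIntegral.integral_comp_mul_left _ hc, integral_exp, smul_eq_mul]
  ring

theorem exp_mul_log_mul_one_sub_div {β : ℝ} (hβ : 0 < β) {t k : ℕ} (ht : t ≠ 0) (hk : k ≤ t) :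
    exp (t * log β * (1 - k / t)) = β ^ (t - k) := by
  have : (t : ℝ) * log β * (1 - k / t) = ((t - k : ℕ) : ℝ) * log β := by
    rw [Nat.cast_sub hk]
    field_simp
  rw [this, exp_nat_mul, exp_log hβ]

theorem integral_exp_mul_log_mul_one_sub {β : ℝ} (hβ0 : 0 < β) (hβ1 : β ≠ 1) {t j : ℕ}
    (hj : j < t) :
    ∫ v in (j : ℝ) / t..((j + 1 : ℕ) : ℝ) / t, exp (t * log β * (1 - v)) =
      β ^ (t - (j + 1)) * (β - 1) / (t * log β) := by
  have ht : t ≠ 0 := by omega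
  have hc : (t : ℝ) * log β ≠ 0 :=
    mul_ne_zero (by exact_mod_cast ht) (log_ne_zero_of_pos_of_ne_one hβ0 hβ1)
  rw [integral_exp_mul_sub hc, exp_mul_log_mul_one_sub_div hβ0 ht hj.le,
    exp_mul_log_mul_one_sub_div hβ0 ht hj, show t - j = t - (j + 1) + 1 by omega, pow_succ]
  ring

theorem rpow_mul_sum_Icc_div_rpow (f : ℕ → ℝ) (t : ℕ) (α : ℝ) :
    (t : ℝ) ^ α * ∑ i ∈ Icc 1 t, f i / (i : ℝ) ^ α =
      ∑ j ∈ range t, (((j + 1 : ℕ) : ℝ) / t) ^ (-α) * f (j + 1) := by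
  rw [← Finset.Ico_add_one_right_eq_Icc, sum_Ico_eq_sum_range, add_tsub_cancel_right, mul_sum]
  refine sum_congr rfl fun j _ ↦ ?_
  rw [add_comm 1 j, rpow_neg (by positivity), div_rpow (by positivity) (by positivity)]
  field_simp

/-- discrete-to-continuous comparison:
`t^α B_t(ρ,α) ≤ L_α(t/2 · (-log(1-2ρ)))`. -/
theorem discrete_to_continuous (α : ℝ) (hα0 : 0 < α) (hα1 : α < 1)
    (t : ℕ) (ht : 1 ≤ t) (ρ : ℝ) (hρ0 : 0 < ρ) (hρ : ρ < 1 / 2) :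
    (t : ℝ) ^ α *
        (ρ * ∑ i ∈ Finset.Icc 1 t, (1 - 2 * ρ) ^ (t - i) / (i : ℝ) ^ α) ≤
      (fun θ : ℝ => θ * ∫ u in (0 : ℝ)..1, Real.exp (-2 * θ * u) * (1 - u) ^ (-α))
        (((t : ℝ) / 2) * (-Real.log (1 - 2 * ρ))) := by
  set β := 1 - 2 * ρ
  have hβ0 : 0 < β := by linarith
  set θ := (t : ℝ) / 2 * -log β
  have hθ : 0 < θ := mul_pos (by positivity) (neg_pos.mpr (log_neg hβ0 (by linarith)))
  have hc : -2 * θ = t * log β := by ring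
  have hpiece (j : ℕ) (hj : j < t) :
      ρ * β ^ (t - (j + 1)) =
        θ * ∫ v in (j : ℝ) / t..((j + 1 : ℕ) : ℝ) / t, exp (-2 * θ * (1 - v)) := by
    rw [hc, integral_exp_mul_log_mul_one_sub hβ0 (by linarith) hj, ← hc]
    field_simp
    ring
  have hflip := intervalIntegral.integral_comp_sub_left (a := 0) (b := 1)
    (fun v ↦ exp (-2 * θ * (1 - v)) * v ^ (-α)) 1
  simp only [sub_sub_cancel, sub_zero, sub_self] at hflip
  calc (t : ℝ) ^ α * (ρ * ∑ i ∈ Icc 1 t, β ^ (t - i) / (i : ℝ) ^ α)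
      = θ * ∑ j ∈ range t, (((j + 1 : ℕ) : ℝ) / t) ^ (-α) *
          ∫ v in (j : ℝ) / t..((j + 1 : ℕ) : ℝ) / t, exp (-2 * θ * (1 - v)) := by
        rw [mul_left_comm, rpow_mul_sum_Icc_div_rpow (fun i ↦ β ^ (t - i)), mul_sum, mul_sum]
        refine sum_congr rfl fun j hj ↦ ?_
        rw [mul_left_comm, hpiece j (mem_range.mp hj), mul_left_comm]
    _ ≤ θ * ∫ v in (0 : ℝ)..1, exp (-2 * θ * (1 - v)) * v ^ (-α) := by
        gcongr
        exact sum_rpow_neg_mul_integral_le_integral_mul_rpow_neg (by fun_prop)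
          (fun _ ↦ (exp_pos _).le) hα0.le hα1 (by omega)
    _ = θ * ∫ u in (0 : ℝ)..1, exp (-2 * θ * u) * (1 - u) ^ (-α) := by rw [hflip]
end

section
/- Fix $0<\alpha<1$ and $\ell\in(1/2,1)$, and set $\theta_\ell = \frac{\alpha}{2-1/\ell}$. If $L_\alpha(\theta_\ell)<\ell$, then $L_\alpha(\theta)<\ell$ for all $\theta>0$; in particular $\sup_{\theta>0} L_\alpha(\theta)\le\ell$. -/
/-!
`μ(θ) = e^{2θ} θ^{-α}` is an integrating factor of the ODE `L' = 1 - (2 - α/θ) L` solved by `L_α`: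
the substitution `s = θ (1 - u)` gives `μ L_α = ∫₀^θ μ`. Hence `G = μ (ℓ - L_α) = ℓ μ - ∫₀^θ μ` has
`G' = μ (ℓ (2 - α/θ) - 1)`, which for `ℓ > 1/2` is negative before `θ_ℓ` and positive after it.
So `G` is minimal at `θ_ℓ`, and `G(θ_ℓ) > 0` forces `G > 0`, i.e. `L_α < ℓ`, everywhere.
-/

open Real MeasureTheory intervalIntegral Set

lemma isMinOn_of_hasDerivAt_nonpos_of_nonneg {G G' : ℝ → ℝ} {a c : ℝ} (hac : a < c)
    (hG : ∀ x ∈ Ioi a, HasDerivAt G (G' x) x)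
    (hleft : ∀ x ∈ Ioo a c, G' x ≤ 0) (hright : ∀ x ∈ Ioi c, 0 ≤ G' x) :
    IsMinOn G (Ioi a) c := by
  have hcont : ContinuousOn G (Ioi a) := fun x hx => (hG x hx).continuousAt.continuousWithinAt
  intro x hx
  rcases le_total x c with hxc | hcx
  · have hanti : AntitoneOn G (Ioc a c) := by
      refine antitoneOn_of_hasDerivWithinAt_nonpos (f' := G') (convex_Ioc a c)
        (hcont.mono Ioc_subset_Ioi_self) (fun y hy => ?_) (fun y hy => ?_) <;>
        rw [interior_Ioc] at hy
      · exact (hG y hy.1).hasDerivWithinAt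
      · exact hleft y hy
    exact hanti ⟨hx, hxc⟩ ⟨hac, le_rfl⟩ hxc
  · have hmono : MonotoneOn G (Ici c) := by
      refine monotoneOn_of_hasDerivWithinAt_nonneg (f' := G') (convex_Ici c)
        (hcont.mono (Ici_subset_Ioi.2 hac)) (fun y hy => ?_) (fun y hy => ?_) <;>
        rw [interior_Ici] at hy
      · exact (hG y (hac.trans hy)).hasDerivWithinAt
      · exact hright y hy
    exact hmono self_mem_Ici hcx hcx

noncomputable def integratingFactor (α t : ℝ) : ℝ := exp (2 * t) * t ^ (-α)

lemma integratingFactor_pos (α : ℝ) {t : ℝ} (ht : 0 < t) : 0 < integratingFactor α t :=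
  mul_pos (exp_pos _) (rpow_pos_of_pos ht _)

lemma hasDerivAt_integratingFactor (α : ℝ) {θ : ℝ} (hθ : 0 < θ) :
    HasDerivAt (integratingFactor α) (integratingFactor α θ * (2 - α / θ)) θ := by
  have hexp : HasDerivAt (fun t => exp (2 * t)) (exp (2 * θ) * 2) θ := by
    simpa using ((hasDerivAt_id θ).const_mul 2).exp
  have hpow := hasDerivAt_rpow_const (x := θ) (p := -α) (Or.inl hθ.ne')
  refine (hexp.mul hpow).congr_deriv ?_
  rw [integratingFactor, rpow_sub_one hθ.ne']
  field_simp
  ring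

lemma integratingFactor_mul_eq_integral (α : ℝ) {θ : ℝ} (hθ : 0 < θ) :
    integratingFactor α θ * (θ * ∫ u in (0 : ℝ)..1, exp (-2 * θ * u) * (1 - u) ^ (-α)) =
      ∫ s in (0 : ℝ)..θ, integratingFactor α s := by
  have hpoint : ∀ u ∈ uIcc (0 : ℝ) 1, integratingFactor α θ * (exp (-2 * θ * u) * (1 - u) ^ (-α))
      = integratingFactor α (θ * (1 - u)) := by
    intro u hu
    rw [uIcc_of_le zero_le_one] at hu
    rw [integratingFactor, integratingFactor, mul_rpow hθ.le (sub_nonneg.2 hu.2),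
      mul_mul_mul_comm, ← exp_add]
    ring_nf
  calc integratingFactor α θ * (θ * ∫ u in (0 : ℝ)..1, exp (-2 * θ * u) * (1 - u) ^ (-α))
      = θ * ∫ u in (0 : ℝ)..1, integratingFactor α (θ * (1 - u)) := by
        rw [← integral_congr hpoint, intervalIntegral.integral_const_mul]
        ring
    _ = θ * ∫ v in (0 : ℝ)..1, integratingFactor α (θ * v) := by
        rw [integral_comp_sub_left (fun v => integratingFactor α (θ * v)) 1, sub_self, sub_zero]
    _ = ∫ s in (0 : ℝ)..θ, integratingFactor α s := by
        rw [mul_integral_comp_mul_left, mul_zero, mul_one]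

lemma hasDerivAt_mul_integratingFactor_sub_integral {α : ℝ} (hα : α < 1) (ℓ : ℝ) {θ : ℝ}
    (hθ : 0 < θ) :
    HasDerivAt (fun t => ℓ * integratingFactor α t - ∫ s in (0 : ℝ)..t, integratingFactor α s)
      (integratingFactor α θ * (ℓ * (2 - α / θ) - 1)) θ := by
  have hint : IntervalIntegrable (integratingFactor α) volume 0 θ :=
    (intervalIntegrable_rpow' (by linarith)).continuousOn_mul (by fun_prop)
  have hcont : ContinuousAt (integratingFactor α) θ :=
    (continuous_exp.comp (continuous_const.mul continuous_id)).continuousAt.mul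
      (continuousAt_rpow_const _ _ (Or.inl hθ.ne'))
  have hmeas : Measurable (integratingFactor α) := by
    unfold integratingFactor
    fun_prop
  have hFTC := integral_hasDerivAt_right hint
    hmeas.stronglyMeasurable.stronglyMeasurableAtFilter hcont
  exact (((hasDerivAt_integratingFactor α hθ).const_mul ℓ).sub hFTC).congr_deriv (by ring)

lemma mul_two_sub_div_sub_one {α ℓ θ : ℝ} (hℓ : 1 / 2 < ℓ) (hθ : θ ≠ 0) :
    ℓ * (2 - α / θ) - 1 = (2 * ℓ - 1) * (θ - α / (2 - 1 / ℓ)) / θ := by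
  have hℓ0 : ℓ ≠ 0 := by linarith
  have hden : 2 * ℓ - 1 ≠ 0 := by linarith
  rw [show 2 - 1 / ℓ = (2 * ℓ - 1) / ℓ by field_simp, div_div_eq_mul_div,
    mul_sub (2 * ℓ - 1), mul_div_cancel₀ _ hden]
  field_simp
  ring

lemma div_two_sub_one_div_pos {α ℓ : ℝ} (hα : 0 < α) (hℓ : 1 / 2 < ℓ) :
    0 < α / (2 - 1 / ℓ) :=
  div_pos hα (by rw [sub_pos, div_lt_iff₀ (by linarith)]; linarith)

lemma isMinOn_mul_integratingFactor_sub_integral {α ℓ : ℝ} (hα0 : 0 < α) (hα1 : α < 1)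
    (hℓ : 1 / 2 < ℓ) :
    IsMinOn (fun t => ℓ * integratingFactor α t - ∫ s in (0 : ℝ)..t, integratingFactor α s)
      (Ioi 0) (α / (2 - 1 / ℓ)) := by
  have hθℓ := div_two_sub_one_div_pos hα0 hℓ
  refine isMinOn_of_hasDerivAt_nonpos_of_nonneg hθℓ
    (fun θ hθ => hasDerivAt_mul_integratingFactor_sub_integral hα1 ℓ hθ)
    (fun θ hθ => ?_) (fun θ hθ => ?_)
  · rw [mul_two_sub_div_sub_one hℓ hθ.1.ne']
    exact mul_nonpos_of_nonneg_of_nonpos (integratingFactor_pos α hθ.1).le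
      (div_nonpos_of_nonpos_of_nonneg
        (mul_nonpos_of_nonneg_of_nonpos (by linarith) (by linarith [hθ.2])) hθ.1.le)
  · have hθ0 : 0 < θ := hθℓ.trans hθ
    rw [mul_two_sub_div_sub_one hℓ hθ0.ne']
    exact mul_nonneg (integratingFactor_pos α hθ0).le
      (div_nonneg (mul_nonneg (by linarith) (by linarith [mem_Ioi.1 hθ])) hθ0.le)

/-- one-point criterion: with `θ_ℓ = α/(2 - 1/ℓ)`,
if `L_α(θ_ℓ) < ℓ` then `L_α(θ) < ℓ` for all `θ > 0`; in particular
`sup_{θ>0} L_α(θ) ≤ ℓ`. -/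
theorem one_point_criterion (α : ℝ) (hα0 : 0 < α) (hα1 : α < 1)
    (ℓ : ℝ) (hℓ : ℓ ∈ Set.Ioo (1 / 2 : ℝ) 1)
    (L : ℝ → ℝ)
    (hL : ∀ θ : ℝ, L θ = θ * ∫ u in (0 : ℝ)..1, Real.exp (-2 * θ * u) * (1 - u) ^ (-α))
    (hpoint : L (α / (2 - 1 / ℓ)) < ℓ) :
    (∀ θ : ℝ, 0 < θ → L θ < ℓ) ∧ ⨆ θ : Set.Ioi (0 : ℝ), L θ ≤ ℓ := by
  have hmin := isMinOn_mul_integratingFactor_sub_integral hα0 hα1 hℓ.1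
  have hθℓ := div_two_sub_one_div_pos hα0 hℓ.1
  set θℓ := α / (2 - 1 / ℓ)
  have hG : ∀ θ, 0 < θ → ℓ * integratingFactor α θ - ∫ s in (0 : ℝ)..θ, integratingFactor α s
      = integratingFactor α θ * (ℓ - L θ) := by
    intro θ hθ
    rw [← integratingFactor_mul_eq_integral α hθ, hL]
    ring
  have hlt : ∀ θ, 0 < θ → L θ < ℓ := by
    intro θ hθ
    have hGθ : integratingFactor α θℓ * (ℓ - L θℓ) ≤ integratingFactor α θ * (ℓ - L θ) := by
      simpa only [hG θ hθ, hG θℓ hθℓ] using isMinOn_iff.1 hmin θ hθ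
    have hpos := (mul_pos (integratingFactor_pos α hθℓ) (sub_pos.2 hpoint)).trans_le hGθ
    exact sub_pos.1 (pos_of_mul_pos_right hpos (integratingFactor_pos α hθ).le)
  have : Nonempty (Ioi (0 : ℝ)) := nonempty_Ioi.to_subtype
  exact ⟨hlt, ciSup_le fun θ => (hlt θ θ.2).le⟩
end

section
/- Fix $\alpha\in(0,1)$, an integer $t\ge1$, and $\rho\in(0,1/2)$. Define $\Gamma_{\alpha,t}(\theta)=\theta\int_0^1 e^{-2\theta u}(1-u+1/t)^{-\alpha}du$. Then $t^\alpha B_t(\rho,\alpha) \ge \Gamma_{\alpha,t}\!\left(\frac{t}{2}(-\log(1-2\rho))\right)$. -/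
set_option maxHeartbeats 1000000

open Real

/-- discrete-to-continuous lower bound:
`t^α B_t(ρ,α) ≥ Γ_{α,t}(t/2 · (-log(1-2ρ)))`. -/
theorem Bt_lower (α : ℝ) (hα0 : 0 < α) (hα1 : α < 1)
    (t : ℕ) (ht : 1 ≤ t) (ρ : ℝ) (hρ0 : 0 < ρ) (hρ : ρ < 1 / 2) :
    (fun θ : ℝ => θ * ∫ u in (0 : ℝ)..1,
        Real.exp (-2 * θ * u) * (1 - u + 1 / (t : ℝ)) ^ (-α))
        (((t : ℝ) / 2) * (-Real.log (1 - 2 * ρ))) ≤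
      (t : ℝ) ^ α *
        (ρ * ∑ i ∈ Finset.Icc 1 t, (1 - 2 * ρ) ^ (t - i) * (i : ℝ) ^ (-α)) := by
  simp only
  have ht0 : (0:ℝ) < t := by exact_mod_cast ht
  have h2ρ : (0:ℝ) < 1 - 2*ρ := by linarith
  have h2ρ1 : 1 - 2*ρ < 1 := by linarith
  have hlog : Real.log (1 - 2*ρ) < 0 := Real.log_neg h2ρ h2ρ1
  set θ : ℝ := ((t : ℝ) / 2) * (-Real.log (1 - 2 * ρ)) with hθdef
  have hθ : 0 < θ := mul_pos (by positivity) (by linarith)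
  have hθ' : θ ≠ 0 := hθ.ne'
  have hexpk : ∀ k : ℕ, Real.exp (-2*θ*((k:ℝ)/t)) = (1-2*ρ)^k := by
    intro k
    have : -2*θ*((k:ℝ)/t) = (k:ℝ) * Real.log (1-2*ρ) := by
      rw [hθdef]; field_simp
    rw [this, Real.exp_nat_mul, Real.exp_log h2ρ]
  set f : ℝ → ℝ := fun u => Real.exp (-2*θ*u) * (1-u+1/(t:ℝ)) ^ (-α) with hfdef
  have hfc : ContinuousOn f (Set.Icc 0 1) := by
    apply ContinuousOn.mul (Continuous.continuousOn (by continuity))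
    apply ContinuousOn.rpow_const (Continuous.continuousOn (by continuity))
    intro x hx
    refine Or.inl (ne_of_gt ?_)
    have h1t : (0:ℝ) < 1/t := by positivity
    have := hx.2
    linarith
  have hstep : ∀ k : ℕ, ((k:ℝ)/t) ≤ ((k:ℝ)+1)/t := by
    intro k; gcongr <;> linarith
  -- subinterval endpoints
  have hsub : ∀ k : ℕ, k < t → Set.uIcc ((k:ℝ)/t) (((k:ℝ)+1)/t) ⊆ Set.Icc 0 1 := by
    intro k hk
    rw [Set.uIcc_of_le (hstep k)]
    apply Set.Icc_subset_Icc (by positivity)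
    rw [div_le_one ht0]
    exact_mod_cast hk
  have hfint : ∀ k : ℕ, k < t →
      IntervalIntegrable f MeasureTheory.volume ((k:ℝ)/t) (((k:ℝ)+1)/t) := by
    intro k hk
    exact (hfc.mono (hsub k hk)).intervalIntegrable
  -- split the integral
  have hsplit : (∫ u in (0:ℝ)..1, f u)
      = ∑ k ∈ Finset.range t, ∫ u in ((k:ℝ)/t)..(((k:ℝ)+1)/t), f u := by
    have := intervalIntegral.sum_integral_adjacent_intervals
      (a := fun k : ℕ => (k:ℝ)/t) (n := t) (f := f) (μ := MeasureTheory.volume)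
      (by intro k hk; exact_mod_cast hfint k hk)
    simp only [Nat.cast_zero, zero_div, div_self ht0.ne'] at this
    rw [← this]
    exact Finset.sum_congr rfl (by intro k _; norm_num)
  -- exact integral of the exponential
  have hEk : ∀ k : ℕ, θ * ∫ u in ((k:ℝ)/t)..(((k:ℝ)+1)/t), Real.exp (-2*θ*u)
      = ρ * (1-2*ρ)^k := by
    intro k
    have hc : (-2*θ) ≠ 0 := by nlinarith
    rw [intervalIntegral.integral_comp_mul_left (fun x => Real.exp x) hc]
    rw [smul_eq_mul, integral_exp]
    have e1 : Real.exp (-2*θ*(((k:ℝ)+1)/t)) = (1-2*ρ)^(k+1) := by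
      rw [← hexpk (k+1)]; push_cast; ring_nf
    rw [e1, hexpk k, pow_succ]
    field_simp
    ring
  -- per-interval bound
  have hbound : ∀ k : ℕ, k < t →
      (∫ u in ((k:ℝ)/t)..(((k:ℝ)+1)/t), f u)
        ≤ (((t:ℝ)-k)/t)^(-α) * ∫ u in ((k:ℝ)/t)..(((k:ℝ)+1)/t), Real.exp (-2*θ*u) := by
    intro k hk
    rw [← intervalIntegral.integral_const_mul]
    apply intervalIntegral.integral_mono_on (hstep k)
      (hfint k hk)
      (Continuous.intervalIntegrable (by continuity) _ _)
    intro x hx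
    have hkt : (k:ℝ) < t := by exact_mod_cast hk
    have hbase : ((t:ℝ)-k)/t ≤ 1 - x + 1/t := by
      have hid : ((t:ℝ)-k)/t = 1 - ((k:ℝ)+1)/t + 1/t := by field_simp; ring
      rw [hid]; linarith [hx.2]
    have hpos : (0:ℝ) < ((t:ℝ)-k)/t := by
      apply div_pos _ ht0; linarith
    have hr := Real.rpow_le_rpow_of_nonpos hpos hbase (by linarith : -α ≤ 0)
    calc f x ≤ Real.exp (-2*θ*x) * (((t:ℝ)-k)/t)^(-α) :=
          mul_le_mul_of_nonneg_left hr (Real.exp_pos _).le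
      _ = (((t:ℝ)-k)/t)^(-α) * Real.exp (-2*θ*x) := by ring
  -- combine
  have hmain : θ * ∫ u in (0:ℝ)..1, f u
      ≤ ∑ k ∈ Finset.range t, (((t:ℝ)-k)/t)^(-α) * (ρ * (1-2*ρ)^k) := by
    rw [hsplit, Finset.mul_sum]
    apply Finset.sum_le_sum
    intro k hk
    have hk' := Finset.mem_range.mp hk
    calc θ * ∫ u in ((k:ℝ)/t)..(((k:ℝ)+1)/t), f u
        ≤ θ * ((((t:ℝ)-k)/t)^(-α) * ∫ u in ((k:ℝ)/t)..(((k:ℝ)+1)/t), Real.exp (-2*θ*u)) :=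
          mul_le_mul_of_nonneg_left (hbound k hk') hθ.le
      _ = (((t:ℝ)-k)/t)^(-α) * (θ * ∫ u in ((k:ℝ)/t)..(((k:ℝ)+1)/t), Real.exp (-2*θ*u)) := by ring
      _ = (((t:ℝ)-k)/t)^(-α) * (ρ * (1-2*ρ)^k) := by rw [hEk k]
  refine hmain.trans_eq ?_
  rw [Finset.mul_sum, Finset.mul_sum]
  apply Finset.sum_nbij' (i := fun k => t - k) (j := fun i => t - i)
  · intro k hk; simp only [Finset.mem_range] at hk; simp only [Finset.mem_Icc]; omega
  · intro i hi; simp only [Finset.mem_Icc] at hi; simp only [Finset.mem_range]; omega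
  · intro k hk; simp only [Finset.mem_range] at hk; omega
  · intro i hi; simp only [Finset.mem_Icc] at hi; omega
  · intro k hk
    have hk' := Finset.mem_range.mp hk
    have h1 : ((t-k:ℕ):ℝ) = (t:ℝ) - k := by
      push_cast [Nat.cast_sub hk'.le]; ring
    have h2 : t - (t - k) = k := Nat.sub_sub_self hk'.le
    have hpos : (0:ℝ) < (t:ℝ) - k := by
      have : (k:ℝ) < t := by exact_mod_cast hk'
      linarith
    rw [h1, h2, Real.div_rpow hpos.le ht0.le, Real.rpow_neg ht0.le]
    field_simp
end

section
/- With $\alpha_0 = 753/1000$ and $\theta_0 = 3/4$, one has $L_{\alpha_0}(\theta_0) = \theta_0\int_0^1 e^{-2\theta_0 u}(1-u)^{-\alpha_0}du > 1$. -/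
/-!
The substitution `v = 1 - u` gives `L_α(θ) = θ e^{-2θ} ∫₀¹ e^{2θv} v^{-α} dv`. Bounding
`e^{2θv}` below by its Taylor polynomial and integrating term by term yields the partial sums
of `θ e^{-2θ} ∑ (2θ)ⁿ / (n! (n + 1 - α))`. Eight terms, together with a Taylor upper bound
for `e^{2θ} = (e^{3/4})²`, already clear `1` (the true value is about `1.0024`).
-/

open Real Finset intervalIntegral
open scoped Nat Interval

theorem integral_exp_neg_mul_one_sub_rpow (c a : ℝ) :
    ∫ u in (0 : ℝ)..1, exp (-c * u) * (1 - u) ^ a =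
      exp (-c) * ∫ v in (0 : ℝ)..1, exp (c * v) * v ^ a := by
  have hsplit : ∀ u : ℝ, exp (-c * u) * (1 - u) ^ a =
      exp (-c) * (exp (c * (1 - u)) * (1 - u) ^ a) := fun u => by
    rw [← mul_assoc, ← exp_add]
    ring_nf
  simp_rw [hsplit, intervalIntegral.integral_const_mul]
  rw [integral_comp_sub_left (fun v => exp (c * v) * v ^ a) 1]
  norm_num

theorem integral_rpow_zero_one {r : ℝ} (hr : -1 < r) :
    ∫ x in (0 : ℝ)..1, x ^ r = 1 / (r + 1) := by
  rw [integral_rpow (Or.inl hr), one_rpow, zero_rpow (by linarith)]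
  ring

theorem sum_le_integral_exp_mul_rpow {c α : ℝ} (hc : 0 ≤ c) (hα : α < 1) (N : ℕ) :
    ∑ n ∈ range N, c ^ n / (n ! * (n + 1 - α)) ≤
      ∫ v in (0 : ℝ)..1, exp (c * v) * v ^ (-α) := by
  have hexponent : ∀ n : ℕ, -1 < (n : ℝ) - α := fun n => by
    linarith [n.cast_nonneg (α := ℝ)]
  have hweight : IntervalIntegrable (fun v : ℝ => v ^ (-α)) MeasureTheory.volume 0 1 :=
    intervalIntegrable_rpow' (by linarith)
  have hmonomial : ∀ n : ℕ, IntervalIntegrable (fun v : ℝ => c ^ n / n ! * v ^ ((n : ℝ) - α))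
      MeasureTheory.volume 0 1 := fun n =>
    (intervalIntegrable_rpow' (hexponent n)).const_mul _
  have hexpand : ∀ᵐ v ∂MeasureTheory.volume, v ∈ Ι (0 : ℝ) 1 →
      (∑ n ∈ range N, (c * v) ^ n / n !) * v ^ (-α) =
        ∑ n ∈ range N, c ^ n / n ! * v ^ ((n : ℝ) - α) := by
    refine Filter.Eventually.of_forall fun v hv => ?_
    have hv : 0 < v := by simpa [Set.uIoc_of_le zero_le_one] using hv.1
    rw [sum_mul]
    refine sum_congr rfl fun n _ => ?_
    rw [sub_eq_add_neg, rpow_add hv, rpow_natCast, mul_pow]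
    ring
  calc ∑ n ∈ range N, c ^ n / (n ! * (n + 1 - α))
      = ∫ v in (0 : ℝ)..1, ∑ n ∈ range N, c ^ n / n ! * v ^ ((n : ℝ) - α) := by
        rw [integral_finsetSum fun n _ => hmonomial n]
        refine sum_congr rfl fun n _ => ?_
        rw [intervalIntegral.integral_const_mul, integral_rpow_zero_one (hexponent n)]
        field_simp
        ring
    _ = ∫ v in (0 : ℝ)..1, (∑ n ∈ range N, (c * v) ^ n / n !) * v ^ (-α) :=
        (intervalIntegral.integral_congr_ae hexpand).symm
    _ ≤ ∫ v in (0 : ℝ)..1, exp (c * v) * v ^ (-α) := by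
        refine intervalIntegral.integral_mono_on zero_le_one
          (hweight.continuousOn_mul (by fun_prop)) (hweight.continuousOn_mul (by fun_prop))
          fun v hv => ?_
        exact mul_le_mul_of_nonneg_right (sum_le_exp_of_nonneg (by nlinarith [hv.1]) N)
          (rpow_nonneg hv.1 _)

/-- with `α₀ = 753/1000` and `θ₀ = 3/4`, `L_{α₀}(θ₀) > 1`. -/
theorem L_above_one :
    1 < (3 / 4 : ℝ) *
      ∫ u in (0 : ℝ)..1,
        Real.exp (-2 * (3 / 4 : ℝ) * u) * (1 - u) ^ (-(753 / 1000 : ℝ)) := by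
  rw [neg_mul, integral_exp_neg_mul_one_sub_rpow, exp_neg, two_mul, exp_add]
  have hseries := sum_le_integral_exp_mul_rpow (c := 3 / 4 + 3 / 4) (α := 753 / 1000)
    (by norm_num) (by norm_num) 8
  have hexp := exp_bound' (x := 3 / 4) (by norm_num) (by norm_num) (n := 6) (by norm_num)
  norm_num [sum_range_succ, Nat.factorial] at hseries hexp ⊢
  rw [← mul_inv, inv_mul_eq_div, ← mul_div_assoc, one_lt_div (by positivity)]
  nlinarith [exp_pos (3 / 4 : ℝ)]
end
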